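/- arXiv:2203.13284 — 2 statements merged into one kernel-verified Lean document; each statement's English description precedes it below -/
import Mathlib

section
/- Let K be a symmetric positive-semidefinite kernel on a set X, let D = {x_1,...,x_N} ⊆ X and S = {s_1,...,s_n} ⊆ X. If the n×n kernel matrix K_S with entries K(s_i,s_j) satisfies ‖K_S‖_F > 0, then the radial SKD R(S) = ‖K‖_F² − (Σ_{i=1}^N Σ_{j=1}^n K²(x_i,s_j))² / ‖K_S‖_F² is nonnegative. -/
/-!
Squaring pointwise preserves positive semidefiniteness (Schur product theorem), so the kernel
matrix of `K²` on the concatenated sample `(x, s)` is a positive semidefinite form. The three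
double sums are its values on the indicator vectors `u` of the `x`-block and `v` of the
`s`-block: `‖K‖_F² = ⟨u, u⟩`, `‖K_S‖_F² = ⟨v, v⟩` and the cross sum is `⟨u, v⟩`. Cauchy–Schwarz
for this form gives `⟨u, v⟩² ≤ ⟨u, u⟩ ⟨v, v⟩`.
-/

open Finset Matrix

theorem Matrix.PosSemidef.dotProduct_mulVec_sq_le {R ι : Type*} [CommRing R] [LinearOrder R]
    [IsStrictOrderedRing R] [StarRing R] [TrivialStar R] [Fintype ι]
    {M : Matrix ι ι R} (hM : M.PosSemidef) (u v : ι → R) :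
    (u ⬝ᵥ M *ᵥ v) ^ 2 ≤ (u ⬝ᵥ M *ᵥ u) * (v ⬝ᵥ M *ᵥ v) := by
  classical
  have hsymm : LinearMap.IsSymm M.toBilin' := LinearMap.BilinForm.isSymm_iff.mp <|
    isSymm_toBilin'_iff_isSymm.mpr (isHermitian_iff_isSymm.mp hM.isHermitian)
  have hnonneg (w : ι → R) : 0 ≤ M.toBilin' w w := by
    simpa [toBilin'_apply'] using hM.dotProduct_mulVec_nonneg w
  simpa only [toBilin'_apply'] using M.toBilin'.apply_sq_le_of_symm hnonneg hsymm u v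

section Kernel

variable {X ι : Type*}

def kernelMatrix (K : X → X → ℝ) (z : ι → X) : Matrix ι ι ℝ :=
  Matrix.of fun i j => K (z i) (z j)

theorem dotProduct_kernelMatrix_mulVec [Fintype ι] (K : X → X → ℝ) (z : ι → X) (u v : ι → ℝ) :
    u ⬝ᵥ kernelMatrix K z *ᵥ v = ∑ i, ∑ j, u i * v j * K (z i) (z j) := by
  simp only [dotProduct, mulVec, kernelMatrix, of_apply, mul_sum]
  exact sum_congr rfl fun i _ => sum_congr rfl fun j _ => by ring

theorem kernelMatrix_posSemidef {K : X → X → ℝ} (hsymm : ∀ x y, K x y = K y x)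
    (hpsd : ∀ (m : ℕ) (z : Fin m → X) (c : Fin m → ℝ),
      0 ≤ ∑ i, ∑ j, c i * c j * K (z i) (z j))
    {m : ℕ} (z : Fin m → X) :
    (kernelMatrix K z).PosSemidef := by
  refine .of_dotProduct_mulVec_nonneg ?_ fun c => ?_
  · ext i j
    simp [kernelMatrix, hsymm (z i)]
  · simpa [dotProduct_kernelMatrix_mulVec] using hpsd m z c

theorem kernelMatrix_sq_posSemidef [Fintype ι] {K : X → X → ℝ} {z : ι → X}
    (hK : (kernelMatrix K z).PosSemidef) :
    (kernelMatrix (fun p q => K p q ^ 2) z).PosSemidef := by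
  have hsq : kernelMatrix (fun p q => K p q ^ 2) z = kernelMatrix K z ⊙ kernelMatrix K z := by
    ext i j
    exact sq _
  exact hsq ▸ hK.hadamard hK

theorem sq_sum_sum_le_mul_of_posSemidef_kernelMatrix {L : X → X → ℝ} {N n : ℕ}
    (x : Fin N → X) (s : Fin n → X) (hL : (kernelMatrix L (Fin.append x s)).PosSemidef) :
    (∑ i, ∑ j, L (x i) (s j)) ^ 2 ≤ (∑ i, ∑ j, L (x i) (x j)) * ∑ i, ∑ j, L (s i) (s j) := by
  simpa [dotProduct_kernelMatrix_mulVec, Fin.sum_univ_add] using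
    hL.dotProduct_mulVec_sq_le (Fin.append 1 0) (Fin.append 0 1)

end Kernel

theorem radial_SKD_nonneg_general {X : Type*} (K : X → X → ℝ) (N n : ℕ)
    (hsymm : ∀ x y, K x y = K y x)
    (hpsd : ∀ (m : ℕ) (z : Fin m → X) (c : Fin m → ℝ),
      0 ≤ ∑ i, ∑ j, c i * c j * K (z i) (z j))
    (x : Fin N → X) (s : Fin n → X) :
    0 ≤ (∑ i, ∑ j, (K (x i) (x j))^2) -
      (∑ i : Fin N, ∑ j : Fin n, (K (x i) (s j))^2)^2 /
        (∑ i, ∑ j, (K (s i) (s j))^2) := by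
  have hK2 := kernelMatrix_sq_posSemidef (kernelMatrix_posSemidef hsymm hpsd (Fin.append x s))
  have hCS := sq_sum_sum_le_mul_of_posSemidef_kernelMatrix x s hK2
  exact sub_nonneg.mpr (div_le_of_le_mul₀ (by positivity) (by positivity) hCS)

/-- nonnegativity of the radial SKD. -/
theorem radial_SKD_nonneg {X : Type*} (K : X → X → ℝ) (N n : ℕ)
    (hsymm : ∀ x y, K x y = K y x)
    (hpsd : ∀ (m : ℕ) (z : Fin m → X) (c : Fin m → ℝ),
      0 ≤ ∑ i, ∑ j, c i * c j * K (z i) (z j))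
    (x : Fin N → X) (s : Fin n → X)
    (hKS : 0 < Real.sqrt (∑ i, ∑ j, (K (s i) (s j))^2)) :
    0 ≤ (∑ i, ∑ j, (K (x i) (x j))^2) -
      (∑ i : Fin N, ∑ j : Fin n, (K (x i) (s j))^2)^2 /
        (∑ i, ∑ j, (K (s i) (s j))^2) :=
  radial_SKD_nonneg_general K N n hsymm hpsd x s
end

section
/- Under conditions (i)–(iii) of the Lipschitz theorem, every first-order partial derivative of c_S = (Σ_{i=1}^N Σ_{j=1}^n K²(x_i,s_j))/‖K_S‖_F² with respect to a landmark-point coordinate is bounded: |∂_{[s_k]_l} c_S| ≤ (M_1/(nα))·(N + (2n−1)C_0), where C_0 = ‖K‖_F/√(nα). -/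
noncomputable section

def sqKer {d : ℕ} (K : (Fin d → ℝ) → (Fin d → ℝ) → ℝ)
    (x y : Fin d → ℝ) : ℝ := (K x y)^2

/-- `∂^{[l]}_{[x]_l} K²(x, y)`. -/
def dLeft {d : ℕ} (K : (Fin d → ℝ) → (Fin d → ℝ) → ℝ)
    (x y : Fin d → ℝ) (l : Fin d) : ℝ :=
  deriv (fun t => sqKer K (Function.update x l t) y) (x l)

/-- `∂^{[d]}_{[x]_l} K²(x, x)`. -/
def dDiag {d : ℕ} (K : (Fin d → ℝ) → (Fin d → ℝ) → ℝ)
    (x : Fin d → ℝ) (l : Fin d) : ℝ :=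
  deriv (fun t => sqKer K (Function.update x l t) (Function.update x l t)) (x l)

/-- `c_S` as a function of the Nyström sample. -/
def cFun {d N n : ℕ} (K : (Fin d → ℝ) → (Fin d → ℝ) → ℝ)
    (x : Fin N → (Fin d → ℝ)) (S : Fin n → (Fin d → ℝ)) : ℝ :=
  (∑ i : Fin N, ∑ j : Fin n, sqKer K (x i) (S j)) /
    (∑ j : Fin n, ∑ j' : Fin n, sqKer K (S j) (S j'))

/-! Write `c_S = F / G` with `F = ∑ᵢⱼ K²(xᵢ, sⱼ)` and `G = ‖K_S‖_F²`, so that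
`∂c_S = (∂F - c_S ∂G) / G`. Moving `[s_k]_l` changes only the `N` terms of `F` and the `2n - 1`
terms of `G` that involve `s_k`, each with derivative at most `M₁`, and `G ≥ nα` by the diagonal
bound. Finally `c_S ≤ C₀`: positive semidefiniteness makes the kernel matrix of `x ∪ S` a Gram
matrix `[Pᵀ; Qᵀ][P Q]`, and Cauchy–Schwarz for the Frobenius pairing of `PPᵀ` and `QQᵀ` gives
`F ≤ ‖K_X‖_F √G`, hence `c_S ≤ ‖K_X‖_F / √G ≤ C₀`. -/

open Finset

section GramCauchySchwarz

variable {ι κ₁ κ₂ : Type*} [Fintype ι] [Fintype κ₁] [Fintype κ₂]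

theorem sum_sq_dotProduct_eq (u : κ₁ → ι → ℝ) (v : κ₂ → ι → ℝ) :
    ∑ i, ∑ j, (u i ⬝ᵥ v j) ^ 2 =
      ∑ r, ∑ r', (∑ i, u i r * u i r') * (∑ j, v j r * v j r') := by
  simp only [dotProduct, sq, sum_mul_sum, mul_mul_mul_comm (u _ _) (v _ _)]
  calc _ = ∑ i, ∑ r, ∑ r', ∑ j, u i r * u i r' * (v j r * v j r') :=
        sum_congr rfl fun i _ => sum_comm.trans (sum_congr rfl fun r _ => sum_comm)
    _ = _ := sum_comm.trans (sum_congr rfl fun r _ => sum_comm)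

theorem sum_sq_dotProduct_le (u : κ₁ → ι → ℝ) (v : κ₂ → ι → ℝ) :
    ∑ i, ∑ j, (u i ⬝ᵥ v j) ^ 2 ≤
      √(∑ i, ∑ i', (u i ⬝ᵥ u i') ^ 2) * √(∑ j, ∑ j', (v j ⬝ᵥ v j') ^ 2) := by
  have := Real.sum_mul_le_sqrt_mul_sqrt univ
    (fun r : ι × ι => ∑ i, u i r.1 * u i r.2) (fun r => ∑ j, v j r.1 * v j r.2)
  rw [sum_sq_dotProduct_eq, sum_sq_dotProduct_eq, sum_sq_dotProduct_eq]
  simpa only [Fintype.sum_prod_type, sq] using this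

end GramCauchySchwarz

theorem exists_dotProduct_eq_of_posSemidef {E : Type*} {m : ℕ} (K : E → E → ℝ)
    (hsymm : ∀ y z, K y z = K z y) (z : Fin m → E)
    (hpsd : ∀ c : Fin m → ℝ, 0 ≤ ∑ i, ∑ j, c i * c j * K (z i) (z j)) :
    ∃ φ : Fin m → Fin m → ℝ, ∀ u v, K (z u) (z v) = φ u ⬝ᵥ φ v := by
  have hA : (Matrix.of fun u v => K (z u) (z v)).PosSemidef := by
    refine .of_dotProduct_mulVec_nonneg (Matrix.ext fun u v => hsymm (z v) (z u)) fun c => ?_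
    refine (hpsd c).trans_eq ?_
    simp only [dotProduct, Matrix.mulVec, Matrix.of_apply, Pi.star_apply, star_trivial, mul_sum]
    exact sum_congr rfl fun u _ => sum_congr rfl fun v _ => by ring
  open scoped MatrixOrder in
  obtain ⟨B, hB⟩ := CStarAlgebra.nonneg_iff_eq_star_mul_self.mp hA.nonneg
  refine ⟨fun u r => B r u, fun u v => ?_⟩
  simpa [Matrix.mul_apply, dotProduct] using congr_fun₂ hB u v

theorem sum_sq_kernel_le {E : Type*} {N n : ℕ} (K : E → E → ℝ) (hsymm : ∀ y z, K y z = K z y)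
    (hpsd : ∀ (m : ℕ) (z : Fin m → E) (c : Fin m → ℝ),
      0 ≤ ∑ i, ∑ j, c i * c j * K (z i) (z j))
    (x : Fin N → E) (s : Fin n → E) :
    ∑ i, ∑ j, K (x i) (s j) ^ 2 ≤
      √(∑ i, ∑ i', K (x i) (x i') ^ 2) * √(∑ j, ∑ j', K (s j) (s j') ^ 2) := by
  obtain ⟨φ, hφ⟩ := exists_dotProduct_eq_of_posSemidef K hsymm _ (hpsd _ (Fin.append x s))
  simpa only [← hφ, Fin.append_left, Fin.append_right] using
    sum_sq_dotProduct_le (fun i => φ (Fin.castAdd n i)) (fun j => φ (Fin.natAdd N j))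

theorem abs_mul_sub_mul_div_sq_le {f g f' g' a b C m : ℝ} (hm : 0 < m) (hmg : m ≤ g) (hf : 0 ≤ f)
    (hfg : f / g ≤ C) (hf' : |f'| ≤ a) (hg' : |g'| ≤ b) :
    |(f' * g - f * g') / g ^ 2| ≤ (a + C * b) / m := by
  have hg : 0 < g := hm.trans_le hmg
  have hC : 0 ≤ C := (div_nonneg hf hg.le).trans hfg
  calc |(f' * g - f * g') / g ^ 2| = |f' - f / g * g'| / g := by
        rw [← abs_of_pos hg, ← abs_div, abs_of_pos hg]
        congr 1
        field_simp
    _ ≤ (|f'| + f / g * |g'|) / g := by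
        gcongr
        refine (abs_sub _ _).trans_eq ?_
        rw [abs_mul, abs_of_nonneg (div_nonneg hf hg.le)]
    _ ≤ (a + C * b) / g := by gcongr
    _ ≤ (a + C * b) / m := by
        gcongr
        exact add_nonneg ((abs_nonneg _).trans hf') (mul_nonneg hC ((abs_nonneg _).trans hg'))

theorem abs_deriv_sum_sum_le {ι κ : Type*} [Fintype ι] [Fintype κ] {f : ι → κ → ℝ → ℝ} {t : ℝ}
    (hf : ∀ i j, DifferentiableAt ℝ (f i j) t) :
    |deriv (fun u => ∑ i, ∑ j, f i j u) t| ≤ ∑ i, ∑ j, |deriv (f i j) t| := by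
  rw [deriv_fun_sum fun i _ => DifferentiableAt.fun_sum fun j _ => hf i j]
  refine (abs_sum_le_sum_abs _ _).trans (sum_le_sum fun i _ => ?_)
  rw [deriv_fun_sum fun j _ => hf i j]
  exact abs_sum_le_sum_abs _ _

variable {d N n : ℕ} {K : (Fin d → ℝ) → (Fin d → ℝ) → ℝ}

theorem sqKer_comm (hsymm : ∀ y z, K y z = K z y) (y z : Fin d → ℝ) :
    sqKer K y z = sqKer K z y := by
  rw [sqKer, hsymm, sqKer]

theorem Differentiable.sqKer (hK : Differentiable ℝ (Function.uncurry K))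
    {φ ψ : ℝ → Fin d → ℝ} (hφ : Differentiable ℝ φ) (hψ : Differentiable ℝ ψ) :
    Differentiable ℝ (fun t => sqKer K (φ t) (ψ t)) :=
  (hK.comp (hφ.prodMk hψ)).pow 2

/-- `‖K_S‖_F²`. -/
def frobSq (K : (Fin d → ℝ) → (Fin d → ℝ) → ℝ) (s : Fin n → Fin d → ℝ) : ℝ :=
  ∑ j, ∑ j', sqKer K (s j) (s j')

def crossFrobSq (K : (Fin d → ℝ) → (Fin d → ℝ) → ℝ) (x : Fin N → Fin d → ℝ)
    (s : Fin n → Fin d → ℝ) : ℝ :=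
  ∑ i, ∑ j, sqKer K (x i) (s j)

theorem crossFrobSq_nonneg (x : Fin N → Fin d → ℝ) (s : Fin n → Fin d → ℝ) :
    0 ≤ crossFrobSq K x s :=
  sum_nonneg fun _ _ => sum_nonneg fun _ _ => sq_nonneg _

theorem mul_le_frobSq {α : ℝ} (hdiag : ∀ y, α ≤ sqKer K y y) (s : Fin n → Fin d → ℝ) :
    n * α ≤ frobSq K s :=
  calc n * α = ∑ j, α := by simp
    _ ≤ ∑ j, sqKer K (s j) (s j) := sum_le_sum fun j _ => hdiag (s j)
    _ ≤ frobSq K s := sum_le_sum fun j _ =>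
        single_le_sum (f := fun j' => sqKer K (s j) (s j')) (fun _ _ => sq_nonneg _) (mem_univ j)

theorem cFun_le {α : ℝ} (hsymm : ∀ y z, K y z = K z y)
    (hpsd : ∀ (m : ℕ) (z : Fin m → (Fin d → ℝ)) (c : Fin m → ℝ),
      0 ≤ ∑ i, ∑ j, c i * c j * K (z i) (z j))
    (hα : 0 < n * α) (hdiag : ∀ y, α ≤ sqKer K y y) (x : Fin N → Fin d → ℝ)
    (s : Fin n → Fin d → ℝ) :
    cFun K x s ≤ √(frobSq K x) / √(n * α) := by
  have hG : n * α ≤ frobSq K s := mul_le_frobSq hdiag s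
  calc cFun K x s ≤ √(frobSq K x) * √(frobSq K s) / frobSq K s :=
        div_le_div_of_nonneg_right (sum_sq_kernel_le K hsymm hpsd x s) (hα.trans_le hG).le
    _ = √(frobSq K x) / √(frobSq K s) := by
        rw [mul_div_assoc, Real.sqrt_div_self', mul_one_div]
    _ ≤ √(frobSq K x) / √(n * α) := by gcongr

section MovePoint

def movePoint (s : Fin n → Fin d → ℝ) (k : Fin n) (l : Fin d) (t : ℝ) : Fin n → Fin d → ℝ :=
  Function.update s k (Function.update (s k) l t)

variable (s : Fin n → Fin d → ℝ) (k : Fin n) (l : Fin d)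

@[simp]
theorem movePoint_self_apply : movePoint s k l (s k l) = s := by
  simp [movePoint]

@[simp]
theorem movePoint_apply_self (t : ℝ) : movePoint s k l t k = Function.update (s k) l t :=
  Function.update_self _ _ _

theorem movePoint_apply_of_ne {j : Fin n} (hj : j ≠ k) (t : ℝ) : movePoint s k l t j = s j :=
  Function.update_of_ne hj _ _

theorem differentiable_movePoint_apply (j : Fin n) :
    Differentiable ℝ (fun t => movePoint s k l t j) := by
  by_cases hj : j = k
  · simp only [hj, movePoint_apply_self]
    exact fun t => (hasDerivAt_update (s k) l t).differentiableAt
  · simp only [movePoint_apply_of_ne s k l hj]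
    exact differentiable_const (s j)

variable {s k l}

theorem differentiable_sqKer_movePoint
    (hK : Differentiable ℝ (Function.uncurry K)) (y : Fin d → ℝ) (j : Fin n) :
    Differentiable ℝ (fun t => sqKer K y (movePoint s k l t j)) :=
  hK.sqKer (differentiable_const y) (differentiable_movePoint_apply s k l j)

theorem differentiable_sqKer_movePoint_movePoint
    (hK : Differentiable ℝ (Function.uncurry K)) (j j' : Fin n) :
    Differentiable ℝ (fun t => sqKer K (movePoint s k l t j) (movePoint s k l t j')) :=
  hK.sqKer (differentiable_movePoint_apply s k l j) (differentiable_movePoint_apply s k l j')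

theorem differentiable_crossFrobSq_movePoint
    (hK : Differentiable ℝ (Function.uncurry K))
    (x : Fin N → Fin d → ℝ) : Differentiable ℝ (fun t => crossFrobSq K x (movePoint s k l t)) :=
  .fun_sum fun i _ => .fun_sum fun j _ => differentiable_sqKer_movePoint hK (x i) j

theorem differentiable_frobSq_movePoint
    (hK : Differentiable ℝ (Function.uncurry K)) :
    Differentiable ℝ (fun t => frobSq K (movePoint s k l t)) :=
  .fun_sum fun j _ => .fun_sum fun j' _ => differentiable_sqKer_movePoint_movePoint hK j j'

variable {M1 : ℝ}

theorem abs_deriv_sqKer_movePoint_right_le (hsymm : ∀ y z, K y z = K z y)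
    (hleft : ∀ y z, |dLeft K y z l| ≤ M1) (y : Fin d → ℝ) (j : Fin n) :
    |deriv (fun t => sqKer K y (movePoint s k l t j)) (s k l)| ≤ if j = k then M1 else 0 := by
  by_cases hj : j = k
  · simp only [hj, movePoint_apply_self, sqKer_comm hsymm y, if_true]
    exact hleft (s k) y
  · simp [movePoint_apply_of_ne s k l hj, hj]

theorem abs_deriv_sqKer_movePoint_le (hsymm : ∀ y z, K y z = K z y)
    (hleft : ∀ y z, |dLeft K y z l| ≤ M1) (hdiag : ∀ y, |dDiag K y l| ≤ M1) (j j' : Fin n) :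
    |deriv (fun t => sqKer K (movePoint s k l t j) (movePoint s k l t j')) (s k l)| ≤
      if j = k ∨ j' = k then M1 else 0 := by
  by_cases hj : j = k <;> by_cases hj' : j' = k
  · simp only [hj, hj', movePoint_apply_self, or_self, if_true]
    exact hdiag (s k)
  · simp only [hj, movePoint_apply_self, movePoint_apply_of_ne s k l hj', true_or, if_true]
    exact hleft (s k) (s j')
  · simp only [hj', movePoint_apply_self, movePoint_apply_of_ne s k l hj, or_true, if_true,
      sqKer_comm hsymm (s j)]
    exact hleft (s k) (s j)
  · simp [movePoint_apply_of_ne s k l, hj, hj']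

theorem abs_deriv_crossFrobSq_movePoint_le
    (hK : Differentiable ℝ (Function.uncurry K))
    (hsymm : ∀ y z, K y z = K z y) (hleft : ∀ y z, |dLeft K y z l| ≤ M1) (x : Fin N → Fin d → ℝ) :
    |deriv (fun t => crossFrobSq K x (movePoint s k l t)) (s k l)| ≤ N * M1 :=
  calc _ ≤ ∑ i, ∑ j, |deriv (fun t => sqKer K (x i) (movePoint s k l t j)) (s k l)| :=
        abs_deriv_sum_sum_le fun i j => (differentiable_sqKer_movePoint hK (x i) j).differentiableAt
    _ ≤ ∑ i : Fin N, ∑ j, if j = k then M1 else 0 := sum_le_sum fun i _ => sum_le_sum fun j _ =>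
        abs_deriv_sqKer_movePoint_right_le hsymm hleft (x i) j
    _ = N * M1 := by simp

theorem abs_deriv_frobSq_movePoint_le
    (hK : Differentiable ℝ (Function.uncurry K))
    (hsymm : ∀ y z, K y z = K z y) (hleft : ∀ y z, |dLeft K y z l| ≤ M1)
    (hdiag : ∀ y, |dDiag K y l| ≤ M1) :
    |deriv (fun t => frobSq K (movePoint s k l t)) (s k l)| ≤ (2 * n - 1) * M1 :=
  calc _ ≤ ∑ j, ∑ j', |deriv (fun t =>
          sqKer K (movePoint s k l t j) (movePoint s k l t j')) (s k l)| :=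
        abs_deriv_sum_sum_le fun j j' =>
          (differentiable_sqKer_movePoint_movePoint hK j j').differentiableAt
    _ ≤ ∑ j, ∑ j', if j = k ∨ j' = k then M1 else 0 := sum_le_sum fun j _ =>
        sum_le_sum fun j' _ => abs_deriv_sqKer_movePoint_le hsymm hleft hdiag j j'
    _ = (2 * n - 1) * M1 := by
        simp [ite_or, sum_ite, filter_ne', filter_eq', Nat.cast_pred k.pos]
        ring

end MovePoint

theorem cFun_partial_deriv_bound_general {d N n : ℕ}
    (K : (Fin d → ℝ) → (Fin d → ℝ) → ℝ)
    (hK : ContDiff ℝ 2 (fun p : (Fin d → ℝ) × (Fin d → ℝ) => K p.1 p.2))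
    (hsymm : ∀ y z, K y z = K z y)
    (hpsd : ∀ (m : ℕ) (z : Fin m → (Fin d → ℝ)) (c : Fin m → ℝ),
      0 ≤ ∑ i, ∑ j, c i * c j * K (z i) (z j))
    (x : Fin N → (Fin d → ℝ)) (α M1 : ℝ) (hα : 0 < α)
    (hdiag : ∀ y : Fin d → ℝ, α ≤ sqKer K y y)
    (hfirst : ∀ (y z : Fin d → ℝ) (l : Fin d),
      |dDiag K y l| ≤ M1 ∧ |dLeft K y z l| ≤ M1)
    (s : Fin n → (Fin d → ℝ)) (k : Fin n) (l : Fin d) :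
    |deriv (fun t => cFun K x (Function.update s k (Function.update (s k) l t)))
        (s k l)| ≤
      (M1 / ((n : ℝ) * α)) *
        ((N : ℝ) + (2 * (n : ℝ) - 1) *
          (Real.sqrt (∑ i, ∑ i', sqKer K (x i) (x i')) /
            Real.sqrt ((n : ℝ) * α))) := by
  have hnα : 0 < (n : ℝ) * α := mul_pos (Nat.cast_pos.mpr k.pos) hα
  have hG : n * α ≤ frobSq K s := mul_le_frobSq hdiag s
  have hKd := hK.differentiable (by norm_num)
  have hleft y z : |dLeft K y z l| ≤ M1 := (hfirst y z l).2
  change |deriv (fun t => crossFrobSq K x (movePoint s k l t) / frobSq K (movePoint s k l t))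
    (s k l)| ≤ M1 / (n * α) * (N + (2 * n - 1) * (√(frobSq K x) / √(n * α)))
  rw [deriv_fun_div (differentiable_crossFrobSq_movePoint hKd x _)
    (differentiable_frobSq_movePoint hKd _) (by simpa using (hnα.trans_le hG).ne'),
    movePoint_self_apply]
  calc _ ≤ (N * M1 + √(frobSq K x) / √(n * α) * ((2 * n - 1) * M1)) / (n * α) :=
        abs_mul_sub_mul_div_sq_le hnα hG (crossFrobSq_nonneg x s) (cFun_le hsymm hpsd hnα hdiag x s)
          (abs_deriv_crossFrobSq_movePoint_le hKd hsymm hleft x)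
          (abs_deriv_frobSq_movePoint_le hKd hsymm hleft fun y => (hfirst y y l).1)
    _ = _ := by ring

/-- bound on the partial derivatives of `c_S`. -/
theorem cFun_partial_deriv_bound {d N n : ℕ} (hn : 0 < n)
    (K : (Fin d → ℝ) → (Fin d → ℝ) → ℝ)
    (hK : ContDiff ℝ 2 (fun p : (Fin d → ℝ) × (Fin d → ℝ) => K p.1 p.2))
    (hsymm : ∀ y z, K y z = K z y)
    (hpsd : ∀ (m : ℕ) (z : Fin m → (Fin d → ℝ)) (c : Fin m → ℝ),
      0 ≤ ∑ i, ∑ j, c i * c j * K (z i) (z j))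
    (x : Fin N → (Fin d → ℝ)) (α M1 : ℝ) (hα : 0 < α) (hM1 : 0 < M1)
    (hdiag : ∀ y : Fin d → ℝ, α ≤ sqKer K y y)
    (hfirst : ∀ (y z : Fin d → ℝ) (l : Fin d),
      |dDiag K y l| ≤ M1 ∧ |dLeft K y z l| ≤ M1)
    (s : Fin n → (Fin d → ℝ)) (k : Fin n) (l : Fin d) :
    |deriv (fun t => cFun K x (Function.update s k (Function.update (s k) l t)))
        (s k l)| ≤
      (M1 / ((n : ℝ) * α)) *
        ((N : ℝ) + (2 * (n : ℝ) - 1) *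
          (Real.sqrt (∑ i, ∑ i', sqKer K (x i) (x i')) /
            Real.sqrt ((n : ℝ) * α))) :=
  cFun_partial_deriv_bound_general K hK hsymm hpsd x α M1 hα hdiag hfirst s k l
end
end
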